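/- arXiv:0706.4138 — 4 statements merged into one kernel-verified Lean document; each statement's English description precedes it below -/
import Mathlib

section
/- For any real m×n matrix X and any symmetric matrices W₁ ∈ ℝ^{m×m}, W₂ ∈ ℝ^{n×n} such that the block matrix [[W₁, X], [X', W₂]] is positive semidefinite, one has ‖X‖_* ≤ (Tr(W₁) + Tr(W₂))/2. Moreover, for every X ∈ ℝ^{m×n} there exist symmetric W₁ ∈ ℝ^{m×m} and W₂ ∈ ℝ^{n×n} with [[W₁, X], [X', W₂]] positive semidefinite and (Tr(W₁) + Tr(W₂))/2 = ‖X‖_*. -/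
/-!
Write `X = U Σ Vᴴ`, where `V` is an orthogonal matrix diagonalizing `XᴴX`, `Σ` is the diagonal of
singular values and `U = X V Σ⁻¹` is a partial isometry. Compressing the positive semidefinite block
matrix by `[U; -V]` gives `2 ‖X‖_* = 2 tr (Uᴴ X V) ≤ tr (Uᴴ W₁ U) + tr (Vᴴ W₂ V)`, and
`tr (Uᴴ W₁ U) ≤ tr W₁` because `U Uᴴ` is an orthogonal projection. Equality is attained by
`W₁ = U Σ Uᴴ = √(X Xᴴ)` and `W₂ = V Σ Vᴴ = √(Xᴴ X)`, for which the block matrix is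
`[U; V] Σ [U; V]ᴴ`.
-/

open Matrix

/-- The nuclear norm (sum of singular values) of a real matrix, as the trace of √(XᵀX). -/
noncomputable def nucNorm {m n : Type*} [Fintype m] [Fintype n] [DecidableEq n]
    (X : Matrix m n ℝ) : ℝ :=
  (((Matrix.posSemidef_conjTranspose_mul_self X).1.eigenvectorUnitary : Matrix n n ℝ) *
    diagonal ((RCLike.ofReal : ℝ → ℝ) ∘ Real.sqrt ∘
      (Matrix.posSemidef_conjTranspose_mul_self X).1.eigenvalues) *
    (star (Matrix.posSemidef_conjTranspose_mul_self X).1.eigenvectorUnitary : Matrix n n ℝ)).trace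

namespace Matrix

variable {m n k : Type*} [Fintype m] [Fintype n] [Fintype k]

section RCLike

variable {𝕜 : Type*} [RCLike 𝕜]
open scoped ComplexOrder

lemma PosSemidef.trace_conjTranspose_mul_mul_le_trace [DecidableEq m] {W : Matrix m m 𝕜}
    (hW : W.PosSemidef) {U : Matrix m k 𝕜} (hU : U * Uᴴ * U = U) :
    (Uᴴ * W * U).trace ≤ W.trace := by
  set Q := 1 - U * Uᴴ
  have hQ : Qᴴ = Q := by simp [Q]
  have hQQ : Q * Q = Q := by
    simp only [Q, Matrix.sub_mul, Matrix.mul_sub, Matrix.mul_one, Matrix.one_mul,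
      ← Matrix.mul_assoc, hU]
    abel
  have hQWQ : (Q * W * Qᴴ).trace = W.trace - (Uᴴ * W * U).trace := by
    rw [hQ, trace_mul_cycle, hQQ, trace_mul_comm, Matrix.mul_sub, Matrix.mul_one, trace_sub,
      ← Matrix.mul_assoc, trace_mul_cycle]
  exact sub_nonneg.mp (hQWQ ▸ (hW.mul_mul_conjTranspose_same Q).trace_nonneg)

lemma PosSemidef.two_mul_re_trace_le_of_fromBlocks {A : Matrix m m 𝕜} {B : Matrix m n 𝕜}
    {D : Matrix n n 𝕜} (h : (fromBlocks A B Bᴴ D).PosSemidef) (P : Matrix m k 𝕜)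
    (Q : Matrix n k 𝕜) :
    2 * RCLike.re (Pᴴ * B * Q).trace ≤
      RCLike.re (Pᴴ * A * P).trace + RCLike.re (Qᴴ * D * Q).trace := by
  have hN := (h.conjTranspose_mul_mul_same (fromRows P (-Q))).trace_nonneg
  rw [conjTranspose_fromRows_eq_fromCols_conjTranspose, fromCols_mul_fromBlocks,
    fromCols_mul_fromRows] at hN
  have hre := (RCLike.nonneg_iff.mp hN).1
  have hstar : (Qᴴ * Bᴴ * P).trace = star (Pᴴ * B * Q).trace := by
    rw [← trace_conjTranspose]; simp [Matrix.mul_assoc]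
  simp only [conjTranspose_neg, Matrix.neg_mul, Matrix.mul_neg, Matrix.add_mul,
    trace_add, trace_neg, map_add, map_neg, hstar, RCLike.star_def, RCLike.conj_re] at hre
  linarith

lemma PosSemidef.fromBlocks_mul_mul_conjTranspose {S : Matrix k k 𝕜} (hS : S.PosSemidef)
    (P : Matrix m k 𝕜) (Q : Matrix n k 𝕜) :
    (fromBlocks (P * S * Pᴴ) (P * S * Qᴴ) (Q * S * Pᴴ) (Q * S * Qᴴ)).PosSemidef := by
  have h := hS.mul_mul_conjTranspose_same (fromRows P Q)
  rwa [conjTranspose_fromRows_eq_fromCols_conjTranspose, fromRows_mul, fromRows_mul_fromCols] at h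

end RCLike

section SingularValueDecomposition

variable [DecidableEq n] (X : Matrix m n ℝ)

noncomputable def rightSingularVectors : Matrix n n ℝ :=
  (posSemidef_conjTranspose_mul_self X).1.eigenvectorUnitary

noncomputable def singularValues (i : n) : ℝ :=
  √((posSemidef_conjTranspose_mul_self X).1.eigenvalues i)

/-- Since `(0 : ℝ)⁻¹ = 0`, the columns belonging to zero singular values vanish, and this is a
partial isometry rather than an isometry. -/
noncomputable def leftSingularVectors : Matrix m n ℝ :=
  X * rightSingularVectors X * diagonal (singularValues X)⁻¹

lemma rightSingularVectors_conjTranspose_mul_self :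
    (rightSingularVectors X)ᴴ * rightSingularVectors X = 1 := by
  rw [← star_eq_conjTranspose]; exact Unitary.coe_star_mul_self _

lemma rightSingularVectors_mul_conjTranspose_self :
    rightSingularVectors X * (rightSingularVectors X)ᴴ = 1 := by
  rw [← star_eq_conjTranspose]; exact Unitary.coe_mul_star_self _

lemma singularValues_nonneg (i : n) : 0 ≤ singularValues X i := Real.sqrt_nonneg _

lemma nucNorm_eq_sum_singularValues : nucNorm X = ∑ i, singularValues X i := by
  rw [nucNorm, trace_mul_cycle, Unitary.coe_star_mul_self, Matrix.one_mul, trace_diagonal]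
  rfl

lemma conjTranspose_mul_self_mul_rightSingularVectors :
    (X * rightSingularVectors X)ᴴ * (X * rightSingularVectors X) =
      diagonal (singularValues X ^ 2) := by
  have hX := posSemidef_conjTranspose_mul_self X
  have h := hX.1.conjStarAlgAut_star_eigenvectorUnitary
  rw [Unitary.conjStarAlgAut_star_apply] at h
  calc (X * rightSingularVectors X)ᴴ * (X * rightSingularVectors X)
      = star (hX.1.eigenvectorUnitary : Matrix n n ℝ) * (Xᴴ * X) *
          (hX.1.eigenvectorUnitary : Matrix n n ℝ) := by
        simp only [rightSingularVectors, conjTranspose_mul, star_eq_conjTranspose, Matrix.mul_assoc]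
    _ = diagonal (singularValues X ^ 2) := by
        rw [h]
        congr 1
        ext i
        simp only [singularValues, Function.comp_apply, RCLike.ofReal_real_eq_id, id, Pi.pow_apply]
        exact (Real.sq_sqrt (hX.eigenvalues_nonneg i)).symm

lemma mul_rightSingularVectors_mul_diagonal_inv_mul_self :
    X * rightSingularVectors X * diagonal ((singularValues X)⁻¹ * singularValues X) =
      X * rightSingularVectors X := by
  ext i j
  rw [mul_diagonal]
  by_cases hj : singularValues X j = 0
  · have hcol : (fun i => (X * rightSingularVectors X) i j) = 0 := by
      refine dotProduct_star_self_eq_zero.mp ?_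
      have := congr_fun₂ (conjTranspose_mul_self_mul_rightSingularVectors X) j j
      rw [mul_apply', diagonal_apply_eq, Pi.pow_apply, hj, zero_pow two_ne_zero] at this
      exact this
    simp [congr_fun hcol i]
  · simp [hj]

lemma leftSingularVectors_mul_diagonal :
    leftSingularVectors X * diagonal (singularValues X) = X * rightSingularVectors X := by
  conv_rhs => rw [← mul_rightSingularVectors_mul_diagonal_inv_mul_self X]
  rw [leftSingularVectors, Matrix.mul_assoc, diagonal_mul_diagonal]
  rfl

lemma leftSingularVectors_mul_diagonal_mul_conjTranspose :
    leftSingularVectors X * diagonal (singularValues X) * (rightSingularVectors X)ᴴ = X := by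
  rw [leftSingularVectors_mul_diagonal, Matrix.mul_assoc,
    rightSingularVectors_mul_conjTranspose_self, Matrix.mul_one]

lemma conjTranspose_leftSingularVectors_mul_self :
    (leftSingularVectors X)ᴴ * leftSingularVectors X =
      diagonal (singularValues X * (singularValues X)⁻¹) := by
  rw [leftSingularVectors, conjTranspose_mul, diagonal_conjTranspose, Matrix.mul_assoc,
    ← Matrix.mul_assoc _ (X * _), conjTranspose_mul_self_mul_rightSingularVectors,
    diagonal_mul_diagonal, diagonal_mul_diagonal]
  congr 1
  ext i
  simp only [Pi.star_apply, star_trivial, Pi.inv_apply, Pi.pow_apply, Pi.mul_apply]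
  rcases eq_or_ne (singularValues X i) 0 with h | h
  · simp [h]
  · field_simp

lemma leftSingularVectors_mul_conjTranspose_mul_self :
    leftSingularVectors X * (leftSingularVectors X)ᴴ * leftSingularVectors X =
      leftSingularVectors X := by
  rw [Matrix.mul_assoc, conjTranspose_leftSingularVectors_mul_self, leftSingularVectors,
    Matrix.mul_assoc, diagonal_mul_diagonal]
  congr 2
  ext i
  simp only [Pi.mul_apply, Pi.inv_apply, ← mul_assoc]
  simpa using mul_inv_mul_cancel (singularValues X i)⁻¹

lemma conjTranspose_leftSingularVectors_mul_self_mul_diagonal :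
    (leftSingularVectors X)ᴴ * leftSingularVectors X * diagonal (singularValues X) =
      diagonal (singularValues X) := by
  rw [conjTranspose_leftSingularVectors_mul_self, diagonal_mul_diagonal]
  congr 1
  ext i
  exact mul_inv_mul_cancel (singularValues X i)

lemma conjTranspose_leftSingularVectors_mul_mul_rightSingularVectors :
    (leftSingularVectors X)ᴴ * X * rightSingularVectors X = diagonal (singularValues X) := by
  calc (leftSingularVectors X)ᴴ * X * rightSingularVectors X
      = (leftSingularVectors X)ᴴ * (leftSingularVectors X * diagonal (singularValues X) *
          (rightSingularVectors X)ᴴ) * rightSingularVectors X := by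
        rw [leftSingularVectors_mul_diagonal_mul_conjTranspose]
    _ = (leftSingularVectors X)ᴴ * leftSingularVectors X * diagonal (singularValues X) *
          ((rightSingularVectors X)ᴴ * rightSingularVectors X) := by
        simp only [Matrix.mul_assoc]
    _ = diagonal (singularValues X) := by
        rw [rightSingularVectors_conjTranspose_mul_self, Matrix.mul_one,
          conjTranspose_leftSingularVectors_mul_self_mul_diagonal]

lemma two_mul_nucNorm_le_trace_add_trace [DecidableEq m] {W₁ : Matrix m m ℝ}
    {W₂ : Matrix n n ℝ} (hW : (fromBlocks W₁ X Xᴴ W₂).PosSemidef) :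
    2 * nucNorm X ≤ W₁.trace + W₂.trace := by
  have hW₁ : W₁.PosSemidef := hW.submatrix Sum.inl
  have hproj := hW₁.trace_conjTranspose_mul_mul_le_trace
    (leftSingularVectors_mul_conjTranspose_mul_self X)
  have hcross := hW.two_mul_re_trace_le_of_fromBlocks (leftSingularVectors X)
    (rightSingularVectors X)
  rw [trace_mul_cycle _ W₂, rightSingularVectors_mul_conjTranspose_self, Matrix.one_mul,
    conjTranspose_leftSingularVectors_mul_mul_rightSingularVectors, trace_diagonal,
    ← nucNorm_eq_sum_singularValues] at hcross
  simp only [RCLike.re_to_real] at hcross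
  linarith

lemma posSemidef_diagonal_singularValues : (diagonal (singularValues X)).PosSemidef :=
  posSemidef_diagonal_iff.mpr (singularValues_nonneg X)

lemma posSemidef_fromBlocks_singularValueDecomposition :
    (fromBlocks (leftSingularVectors X * diagonal (singularValues X) * (leftSingularVectors X)ᴴ)
      X Xᴴ (rightSingularVectors X * diagonal (singularValues X) * (rightSingularVectors X)ᴴ)
      ).PosSemidef := by
  have hS := posSemidef_diagonal_singularValues X
  have hX := leftSingularVectors_mul_diagonal_mul_conjTranspose X
  have hXH := congrArg conjTranspose hX
  simp only [conjTranspose_mul, hS.1.eq, conjTranspose_conjTranspose, ← Matrix.mul_assoc] at hXH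
  simpa only [hX, hXH] using
    hS.fromBlocks_mul_mul_conjTranspose (leftSingularVectors X) (rightSingularVectors X)

lemma trace_add_trace_singularValueDecomposition :
    (leftSingularVectors X * diagonal (singularValues X) * (leftSingularVectors X)ᴴ).trace +
      (rightSingularVectors X * diagonal (singularValues X) * (rightSingularVectors X)ᴴ).trace =
      2 * nucNorm X := by
  rw [trace_mul_cycle, conjTranspose_leftSingularVectors_mul_self_mul_diagonal, trace_mul_cycle,
    rightSingularVectors_conjTranspose_mul_self, Matrix.one_mul, trace_diagonal,
    nucNorm_eq_sum_singularValues]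
  ring

end SingularValueDecomposition

end Matrix

/-- SDP characterization of the nuclear norm: whenever [[W₁, X], [Xᵀ, W₂]] ⪰ 0 with W₁, W₂
symmetric, one has ‖X‖₊ ≤ (Tr W₁ + Tr W₂)/2, and this bound is attained for suitable W₁, W₂. -/
theorem nucNorm_sdp_characterization (m n : ℕ) (X : Matrix (Fin m) (Fin n) ℝ) :
    (∀ (W₁ : Matrix (Fin m) (Fin m) ℝ) (W₂ : Matrix (Fin n) (Fin n) ℝ),
      W₁.IsSymm → W₂.IsSymm → (Matrix.fromBlocks W₁ X Xᵀ W₂).PosSemidef →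
      nucNorm X ≤ (W₁.trace + W₂.trace) / 2) ∧
    (∃ (W₁ : Matrix (Fin m) (Fin m) ℝ) (W₂ : Matrix (Fin n) (Fin n) ℝ),
      W₁.IsSymm ∧ W₂.IsSymm ∧ (Matrix.fromBlocks W₁ X Xᵀ W₂).PosSemidef ∧
      (W₁.trace + W₂.trace) / 2 = nucNorm X) := by
  rw [← conjTranspose_eq_transpose_of_trivial]
  have hS := posSemidef_diagonal_singularValues X
  refine ⟨fun W₁ W₂ _ _ hW => by linarith [two_mul_nucNorm_le_trace_add_trace X hW],
    leftSingularVectors X * diagonal (singularValues X) * (leftSingularVectors X)ᴴ,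
    rightSingularVectors X * diagonal (singularValues X) * (rightSingularVectors X)ᴴ,
    isHermitian_iff_isSymm.mp (hS.mul_mul_conjTranspose_same _).1,
    isHermitian_iff_isSymm.mp (hS.mul_mul_conjTranspose_same _).1,
    posSemidef_fromBlocks_singularValueDecomposition X, ?_⟩
  linarith [trace_add_trace_singularValueDecomposition X]
end

section
/- Let 𝒜 : ℝ^{m×n} → ℝ^p be a linear map, let r ≥ 1 be an integer, and let X₀ ∈ ℝ^{m×n} with rank(X₀) ≤ r and b = 𝒜(X₀). Suppose there is a constant δ with 0 ≤ δ < 1 such that (1−δ)‖X‖_F ≤ ‖𝒜(X)‖ ≤ (1+δ)‖X‖_F for all matrices X ∈ ℝ^{m×n} of rank at most 2r. Then X₀ is the only matrix of rank at most r satisfying 𝒜(X) = b. -/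
/-!
Two rank-`r` solutions differ by a matrix of rank at most `2r` in the kernel of `𝒜`; the lower
isometry bound at rank `2r` forces such a matrix to have Frobenius norm zero.
-/

open Matrix

/-- The Frobenius norm of a real matrix. -/
noncomputable def frobNorm {m n : Type*} [Fintype m] [Fintype n] (X : Matrix m n ℝ) : ℝ :=
  Real.sqrt (∑ i, ∑ j, X i j ^ 2)

theorem frobNorm_nonneg {m n : Type*} [Fintype m] [Fintype n] (X : Matrix m n ℝ) :
    0 ≤ frobNorm X :=
  Real.sqrt_nonneg _

theorem frobNorm_eq_zero_iff {m n : Type*} [Fintype m] [Fintype n] {X : Matrix m n ℝ} :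
    frobNorm X = 0 ↔ X = 0 := by
  rw [frobNorm, Real.sqrt_eq_zero (by positivity),
    Fintype.sum_eq_zero_iff_of_nonneg fun i => by positivity, ← Matrix.ext_iff]
  simp only [funext_iff, Pi.zero_apply, Matrix.zero_apply,
    Fintype.sum_eq_zero_iff_of_nonneg fun _ => sq_nonneg _, pow_eq_zero_iff two_ne_zero]

namespace Matrix

variable {K m n : Type*} [Field K] [Fintype n]

theorem rank_add_le (A B : Matrix m n K) : (A + B).rank ≤ A.rank + B.rank :=
  calc (A + B).rank
      ≤ Module.finrank K ↥(LinearMap.range A.mulVecLin ⊔ LinearMap.range B.mulVecLin) := by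
        rw [rank, mulVecLin_add]
        exact Submodule.finrank_mono (LinearMap.range_add_le _ _)
    _ ≤ A.rank + B.rank := Submodule.finrank_add_le_finrank_add_finrank _ _

theorem rank_neg (A : Matrix m n K) : (-A).rank = A.rank := by
  classical
  rw [rank, rank, ← toLin'_apply', ← toLin'_apply', map_neg, LinearMap.range_neg]

theorem rank_sub_le (A B : Matrix m n K) : (A - B).rank ≤ A.rank + B.rank := by
  simpa only [sub_eq_add_neg, rank_neg] using rank_add_le A (-B)

end Matrix

theorem eq_of_map_eq_of_rank_le {K m n E F : Type*} [Field K] [Fintype n] [AddGroup E]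
    [FunLike F (Matrix m n K) E] [AddMonoidHomClass F (Matrix m n K) E] {𝒜 : F} {r : ℕ}
    (h𝒜 : ∀ Z : Matrix m n K, Z.rank ≤ 2 * r → 𝒜 Z = 0 → Z = 0)
    {X Y : Matrix m n K} (hX : X.rank ≤ r) (hY : Y.rank ≤ r) (hXY : 𝒜 X = 𝒜 Y) : X = Y := by
  have hrank : (X - Y).rank ≤ 2 * r := by
    have := rank_sub_le X Y
    omega
  exact sub_eq_zero.mp (h𝒜 _ hrank (by rw [map_sub, hXY, sub_self]))

theorem eq_zero_of_map_eq_zero_of_lower_bound {m n E : Type*} [Fintype m] [Fintype n]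
    [SeminormedAddCommGroup E] {𝒜 : Matrix m n ℝ → E} {δ : ℝ} (hδ : δ < 1) {X : Matrix m n ℝ}
    (hlower : (1 - δ) * frobNorm X ≤ ‖𝒜 X‖) (hX : 𝒜 X = 0) : X = 0 := by
  rw [hX, norm_zero] at hlower
  have hnonpos : frobNorm X ≤ 0 := nonpos_of_mul_nonpos_right hlower (by linarith)
  exact frobNorm_eq_zero_iff.mp (le_antisymm hnonpos (frobNorm_nonneg X))

theorem unique_low_rank_solution_of_rip_general (m n p r : ℕ)
    (𝒜 : Matrix (Fin m) (Fin n) ℝ →ₗ[ℝ] EuclideanSpace ℝ (Fin p))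
    (X₀ : Matrix (Fin m) (Fin n) ℝ) (hX₀ : X₀.rank ≤ r)
    (b : EuclideanSpace ℝ (Fin p)) (hb : 𝒜 X₀ = b)
    (δ : ℝ) (hδ1 : δ < 1)
    (hRIP : ∀ X : Matrix (Fin m) (Fin n) ℝ, X.rank ≤ 2 * r →
      (1 - δ) * frobNorm X ≤ ‖𝒜 X‖ ∧ ‖𝒜 X‖ ≤ (1 + δ) * frobNorm X) :
    ∀ X : Matrix (Fin m) (Fin n) ℝ, X.rank ≤ r → 𝒜 X = b → X = X₀ := by
  intro X hX h𝒜X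
  have hker : ∀ Z : Matrix (Fin m) (Fin n) ℝ, Z.rank ≤ 2 * r → 𝒜 Z = 0 → Z = 0 :=
    fun Z hZ => eq_zero_of_map_eq_zero_of_lower_bound hδ1 (hRIP Z hZ).1
  exact eq_of_map_eq_of_rank_le hker hX hX₀ (h𝒜X.trans hb.symm)

/-- If the restricted isometry property holds at rank 2r with constant δ < 1, then X₀ is
the unique matrix of rank at most r satisfying 𝒜(X) = b. -/
theorem unique_low_rank_solution_of_rip (m n p r : ℕ) (hr : 1 ≤ r)
    (𝒜 : Matrix (Fin m) (Fin n) ℝ →ₗ[ℝ] EuclideanSpace ℝ (Fin p))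
    (X₀ : Matrix (Fin m) (Fin n) ℝ) (hX₀ : X₀.rank ≤ r)
    (b : EuclideanSpace ℝ (Fin p)) (hb : 𝒜 X₀ = b)
    (δ : ℝ) (hδ0 : 0 ≤ δ) (hδ1 : δ < 1)
    (hRIP : ∀ X : Matrix (Fin m) (Fin n) ℝ, X.rank ≤ 2 * r →
      (1 - δ) * frobNorm X ≤ ‖𝒜 X‖ ∧ ‖𝒜 X‖ ≤ (1 + δ) * frobNorm X) :
    ∀ X : Matrix (Fin m) (Fin n) ℝ, X.rank ≤ r → 𝒜 X = b → X = X₀ :=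
  unique_low_rank_solution_of_rip_general m n p r 𝒜 X₀ hX₀ b hb δ hδ1 hRIP
end

section
/- Let 𝒜 be a random variable taking values in linear maps from ℝ^{m×n} to ℝ^p such that for every X ∈ ℝ^{m×n} and every 0 < ε < 1, ℙ(| ‖𝒜(X)‖² − ‖X‖_F² | ≥ ε‖X‖_F²) ≤ 2·exp(−(p/2)(ε²/2 − ε³/3)). Let U be a linear subspace of ℝ^{m×n} with d = dim(U) ≤ p, and let 0 < δ < 1. Then with probability at least 1 − 2·(12/δ)^d·exp(−(p/2)(δ²/8 − δ³/24)), the bounds (1−δ)‖X‖_F ≤ ‖𝒜(X)‖ ≤ (1+δ)‖X‖_F hold simultaneously for all X ∈ U. -/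
/-!
Take a `δ / 4`-net `Q` of the unit sphere of `U` for the Frobenius norm; comparing volumes of
disjoint balls gives `#Q ≤ (1 + 8 / δ) ^ d ≤ (12 / δ) ^ d`. By the concentration hypothesis with
`ε = δ / 2` and a union bound over `Q`, outside an event of probability at most
`#Q · 2 exp (-(p / 2) (δ² / 8 - δ³ / 24))` the map `𝒜` distorts the squared norm of every point
of the net by less than `δ / 2`. Approximating a unit vector by a net point then gives
`‖𝒜‖ ≤ 1 + δ / 4 + (δ / 4) ‖𝒜‖`, hence `‖𝒜‖ ≤ 1 + δ`, and with it the lower bound `1 - δ`.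
-/

open Matrix MeasureTheory

open Metric Module Finset
open scoped NNReal ENNReal Matrix.Norms.Frobenius

section Packing

variable {E : Type*} [NormedAddCommGroup E] [NormedSpace ℝ E] [FiniteDimensional ℝ E]

theorem Finset.card_le_of_isSeparated_of_subset_closedBall {ε : ℝ≥0} (hε : 0 < ε) {x : E}
    {R : ℝ} (hR : 0 ≤ R) {s : Finset E} (hs : (s : Set E) ⊆ closedBall x R)
    (hsep : IsSeparated ε (s : Set E)) :
    (#s : ℝ) ≤ (1 + 2 * R / ε) ^ finrank ℝ E := by
  borelize E
  let μ : Measure E := Measure.addHaar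
  have hε2 : (0 : ℝ) < ε / 2 := by positivity
  have hdisj : (s : Set E).PairwiseDisjoint fun c => ball c (ε / 2) := by
    intro c hc c' hc' hcc'
    refine ball_disjoint_ball ?_
    have : (ε : ℝ≥0∞) < edist c c' := hsep hc hc' hcc'
    rw [edist_dist, ← ENNReal.ofReal_coe_nnreal, ENNReal.ofReal_lt_ofReal_iff_of_nonneg
      ε.coe_nonneg] at this
    linarith
  have hsub : ⋃ c ∈ s, ball c (ε / 2) ⊆ ball x (R + ε / 2) :=
    Set.iUnion₂_subset fun c hc => ball_subset_ball' (by linarith [mem_closedBall.1 (hs hc)])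
  have hvol : (#s : ℝ≥0∞) * ENNReal.ofReal ((ε / 2) ^ finrank ℝ E) * μ (ball 0 1) ≤
      ENNReal.ofReal ((R + ε / 2) ^ finrank ℝ E) * μ (ball 0 1) := calc
    _ = μ (⋃ c ∈ s, ball c (ε / 2)) := by
      rw [measure_biUnion_finset hdisj fun c _ => measurableSet_ball]
      simp [μ.addHaar_ball_of_pos _ hε2, mul_assoc]
    _ ≤ μ (ball x (R + ε / 2)) := measure_mono hsub
    _ = _ := μ.addHaar_ball_of_pos _ (by positivity)
  rw [ENNReal.mul_le_mul_iff_left (measure_ball_pos _ _ one_pos).ne' measure_ball_lt_top.ne,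
    ← ENNReal.ofReal_natCast, ← ENNReal.ofReal_mul (by positivity),
    ENNReal.ofReal_le_ofReal_iff (by positivity)] at hvol
  have hratio : 1 + 2 * R / ε = (R + ε / 2) / (ε / 2) := by field_simp; ring
  rwa [hratio, div_pow, le_div_iff₀ (by positivity)]

theorem packingNumber_le_of_subset_closedBall {ε : ℝ≥0} (hε : 0 < ε) {x : E} {R : ℝ}
    (hR : 0 ≤ R) {A : Set E} (hA : A ⊆ closedBall x R) :
    packingNumber ε A ≤ ⌊(1 + 2 * R / ε) ^ finrank ℝ E⌋₊ := by
  refine iSup₂_le fun C hCA => iSup_le fun hC => ?_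
  by_contra! hlt
  obtain ⟨t, htC, ht⟩ := Set.exists_subset_encard_eq (Order.add_one_le_of_lt hlt)
  have htfin : t.Finite := Set.finite_of_encard_eq_coe ht
  have hcard := Finset.card_le_of_isSeparated_of_subset_closedBall hε hR (s := htfin.toFinset)
    (by simpa using (htC.trans hCA).trans hA) (by simpa using hC.subset htC)
  rw [htfin.encard_eq_coe_toFinset_card] at ht
  norm_cast at ht
  rw [ht, Nat.cast_add_one] at hcard
  exact (Nat.lt_floor_add_one _).not_ge hcard

theorem exists_finset_isCover_sphere {ε : ℝ≥0} (hε : 0 < ε) :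
    ∃ Q : Finset E, (Q : Set E) ⊆ sphere 0 1 ∧ IsCover ε (sphere (0 : E) 1) Q ∧
      (#Q : ℝ) ≤ (1 + 2 / ε) ^ finrank ℝ E := by
  have hpack := packingNumber_le_of_subset_closedBall hε zero_le_one
    (sphere_subset_closedBall (x := (0 : E)))
  have hfin : packingNumber ε (sphere (0 : E) 1) ≠ ⊤ := ne_top_of_le_ne_top (by simp) hpack
  rw [← encard_maximalSeparatedSet hfin] at hpack
  have hQfin := Set.finite_of_encard_le_coe hpack
  refine ⟨hQfin.toFinset, by simpa using maximalSeparatedSet_subset,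
    by simpa using isCover_maximalSeparatedSet hfin, ?_⟩
  rw [hQfin.encard_eq_coe_toFinset_card] at hpack
  norm_cast at hpack
  simpa using (Nat.cast_le.2 hpack).trans (Nat.floor_le (by positivity))

end Packing

theorem Metric.IsCover.exists_norm_sub_le {E : Type*} [SeminormedAddCommGroup E] {ε : ℝ≥0}
    {s N : Set E} (hN : IsCover ε s N) {x : E} (hx : x ∈ s) : ∃ y ∈ N, ‖x - y‖ ≤ ε := by
  simpa [dist_eq_norm] using isCover_iff_subset_iUnion_closedBall.1 hN hx

theorem one_sub_le_of_abs_sq_sub_one_le {t ε : ℝ} (ht : 0 ≤ t) (h : |t ^ 2 - 1| ≤ ε) :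
    1 - ε ≤ t := by
  have := neg_le_of_abs_le h
  rcases le_total 1 t with h1 | h1 <;> nlinarith [abs_nonneg (t ^ 2 - 1)]

theorem le_one_add_half_of_abs_sq_sub_one_le {t ε : ℝ} (h : |t ^ 2 - 1| ≤ ε) :
    t ≤ 1 + ε / 2 := by
  have := le_of_abs_le h
  nlinarith [abs_nonneg (t ^ 2 - 1)]

namespace ContinuousLinearMap

variable {E F : Type*} [NormedAddCommGroup E] [NormedSpace ℝ E] [NormedAddCommGroup F]
  [NormedSpace ℝ F] (T : E →L[ℝ] F) {ε : ℝ≥0} {Q : Set E}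

theorem mul_norm_le_norm_apply_of_forall_norm_eq_one {c : ℝ}
    (h : ∀ x, ‖x‖ = 1 → c ≤ ‖T x‖) (v : E) : c * ‖v‖ ≤ ‖T v‖ := by
  obtain rfl | hv := eq_or_ne v 0
  · simp
  simpa [norm_smul, field] using h (‖v‖⁻¹ • v) (norm_smul_inv_norm hv)

theorem opNorm_le_of_isCover_sphere (hQ : IsCover ε (sphere 0 1) Q) {M : ℝ} (hM0 : 0 ≤ M)
    (hM : ∀ q ∈ Q, ‖T q‖ ≤ M) : ‖T‖ ≤ M + ε * ‖T‖ :=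
  T.opNorm_le_of_unit_norm (by positivity) fun x hx => by
    obtain ⟨q, hq, hxq⟩ := hQ.exists_norm_sub_le (mem_sphere_zero_iff_norm.2 hx)
    calc ‖T x‖ = ‖T q + T (x - q)‖ := by rw [map_sub, add_sub_cancel]
      _ ≤ ‖T q‖ + ‖T‖ * ‖x - q‖ := norm_add_le_of_le le_rfl (T.le_opNorm _)
      _ ≤ M + ‖T‖ * ε := by gcongr; exact hM q hq
      _ = M + ε * ‖T‖ := by rw [mul_comm]

theorem sub_mul_opNorm_mul_norm_le_norm_apply_of_isCover_sphere
    (hQ : IsCover ε (sphere 0 1) Q) {m : ℝ} (hm : ∀ q ∈ Q, m ≤ ‖T q‖) (v : E) :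
    (m - ε * ‖T‖) * ‖v‖ ≤ ‖T v‖ := by
  refine T.mul_norm_le_norm_apply_of_forall_norm_eq_one (fun x hx => ?_) v
  obtain ⟨q, hq, hxq⟩ := hQ.exists_norm_sub_le (mem_sphere_zero_iff_norm.2 hx)
  calc m - ε * ‖T‖ ≤ ‖T q‖ - ‖T‖ * ‖q - x‖ := by
        rw [norm_sub_rev, mul_comm]; gcongr; exact hm q hq
    _ ≤ ‖T q‖ - ‖T q - T x‖ := by rw [← map_sub]; gcongr; exact T.le_opNorm _
    _ ≤ ‖T x‖ := by linarith [norm_sub_norm_le (T q) (T x)]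

theorem norm_apply_mem_Icc_of_isCover_sphere {δ : ℝ} (hδ0 : 0 ≤ δ) (hδ1 : δ ≤ 1)
    (hQ : IsCover (δ / 4).toNNReal (sphere 0 1) Q) (hTQ : ∀ q ∈ Q, |‖T q‖ ^ 2 - 1| ≤ δ / 2)
    (v : E) : (1 - δ) * ‖v‖ ≤ ‖T v‖ ∧ ‖T v‖ ≤ (1 + δ) * ‖v‖ := by
  have hr : ((δ / 4).toNNReal : ℝ) = δ / 4 := Real.coe_toNNReal _ (by positivity)
  have hT := T.opNorm_le_of_isCover_sphere hQ (M := 1 + δ / 4) (by positivity) fun q hq => by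
    linarith [le_one_add_half_of_abs_sq_sub_one_le (hTQ q hq)]
  have hlow := T.sub_mul_opNorm_mul_norm_le_norm_apply_of_isCover_sphere hQ
    (fun q hq => one_sub_le_of_abs_sq_sub_one_le (norm_nonneg _) (hTQ q hq)) v
  rw [hr] at hT hlow
  have hTnorm : ‖T‖ ≤ 1 + δ := by nlinarith
  refine ⟨le_trans ?_ hlow, (T.le_opNorm v).trans (by gcongr)⟩
  exact mul_le_mul_of_nonneg_right (by nlinarith) (norm_nonneg v)

end ContinuousLinearMap

theorem MeasureTheory.ofReal_one_sub_le_measure_of_measure_compl_le {Ω : Type*}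
    [MeasurableSpace Ω] {μ : Measure Ω} [IsProbabilityMeasure μ] {s : Set Ω} {x : ℝ} (hx : 0 ≤ x)
    (h : μ sᶜ ≤ ENNReal.ofReal x) :
    ENNReal.ofReal (1 - x) ≤ μ s := by
  rw [ENNReal.ofReal_sub _ hx, ENNReal.ofReal_one, tsub_le_iff_right]
  calc 1 = μ Set.univ := measure_univ.symm
    _ ≤ μ s + μ sᶜ := measure_univ_le_add_compl s
    _ ≤ μ s + ENNReal.ofReal x := by gcongr

theorem MeasureTheory.measure_biUnion_finset_le_ofReal_card_mul {Ω ι : Type*} [MeasurableSpace Ω]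
    {μ : Measure Ω} {s : Finset ι} {f : ι → Set Ω} {c : ℝ}
    (h : ∀ i ∈ s, μ (f i) ≤ ENNReal.ofReal c) :
    μ (⋃ i ∈ s, f i) ≤ ENNReal.ofReal (#s * c) := by
  rw [ENNReal.ofReal_mul (by positivity), ENNReal.ofReal_natCast, ← nsmul_eq_mul]
  exact (measure_biUnion_finset_le s f).trans (s.sum_le_card_nsmul _ _ h)

theorem frobNorm_eq_norm {m n : Type*} [Fintype m] [Fintype n] (X : Matrix m n ℝ) :
    frobNorm X = ‖X‖ := by
  simp [frobNorm, Matrix.frobenius_norm_def, Real.sqrt_eq_rpow, sq_abs]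

theorem rip_on_subspace_general (m n p : ℕ) {Ω : Type*} [MeasurableSpace Ω]
    (ℙ : Measure Ω) [IsProbabilityMeasure ℙ]
    (𝒜 : Ω → Matrix (Fin m) (Fin n) ℝ →ₗ[ℝ] EuclideanSpace ℝ (Fin p))
    (hconc : ∀ (X : Matrix (Fin m) (Fin n) ℝ) (ε : ℝ), 0 < ε → ε < 1 →
      ℙ {ω | ε * frobNorm X ^ 2 ≤ |‖𝒜 ω X‖ ^ 2 - frobNorm X ^ 2|} ≤
        ENNReal.ofReal (2 * Real.exp (-(p / 2 : ℝ) * (ε ^ 2 / 2 - ε ^ 3 / 3))))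
    (U : Submodule ℝ (Matrix (Fin m) (Fin n) ℝ)) (d : ℕ)
    (hd : Module.finrank ℝ U = d)
    (δ : ℝ) (hδ0 : 0 < δ) (hδ1 : δ < 1) :
    ENNReal.ofReal
        (1 - 2 * (12 / δ) ^ d * Real.exp (-(p / 2 : ℝ) * (δ ^ 2 / 8 - δ ^ 3 / 24))) ≤
      ℙ {ω | ∀ X ∈ U,
        (1 - δ) * frobNorm X ≤ ‖𝒜 ω X‖ ∧ ‖𝒜 ω X‖ ≤ (1 + δ) * frobNorm X} := by
  obtain ⟨Q, hQsphere, hQ, hQcard⟩ :=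
    exists_finset_isCover_sphere (E := U) (ε := (δ / 4).toNNReal) (by simpa using hδ0)
  have hcard : (#Q : ℝ) ≤ (12 / δ) ^ d := hQcard.trans <| by
    rw [hd, Real.coe_toNNReal _ (by positivity)]
    gcongr
    rw [le_div_iff₀ hδ0]
    field_simp
    linarith
  let bad (q : U) : Set Ω := {ω | δ / 2 * frobNorm q.1 ^ 2 ≤ |‖𝒜 ω q‖ ^ 2 - frobNorm q.1 ^ 2|}
  have hbad : ∀ q ∈ Q, ℙ (bad q) ≤
      ENNReal.ofReal (2 * Real.exp (-(p / 2 : ℝ) * (δ ^ 2 / 8 - δ ^ 3 / 24))) := fun q _ => by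
    have hexp : (δ / 2) ^ 2 / 2 - (δ / 2) ^ 3 / 3 = δ ^ 2 / 8 - δ ^ 3 / 24 := by ring
    simpa only [hexp] using hconc q (δ / 2) (by linarith) (by linarith)
  refine ofReal_one_sub_le_measure_of_measure_compl_le (by positivity)
    ((measure_mono ?_).trans ((measure_biUnion_finset_le_ofReal_card_mul hbad).trans ?_))
  · rw [Set.compl_subset_comm]
    intro ω hω X hX
    let T := ((𝒜 ω).comp U.subtype).toContinuousLinearMap
    have hTQ : ∀ q ∈ (Q : Set U), |‖T q‖ ^ 2 - 1| ≤ δ / 2 := fun q hq => by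
      have hq1 : frobNorm q.1 = 1 := by
        rw [frobNorm_eq_norm]; exact mem_sphere_zero_iff_norm.1 (hQsphere hq)
      have hgood : |‖T q‖ ^ 2 - frobNorm q.1 ^ 2| < δ / 2 * frobNorm q.1 ^ 2 :=
        not_le.1 fun h => hω (Set.mem_biUnion (x := q) hq h)
      rw [hq1, one_pow, mul_one] at hgood
      exact hgood.le
    rw [frobNorm_eq_norm]
    exact T.norm_apply_mem_Icc_of_isCover_sphere hδ0.le hδ1.le hQ hTQ ⟨X, hX⟩
  · refine ENNReal.ofReal_le_ofReal ?_
    nlinarith [Real.exp_pos (-(p / 2 : ℝ) * (δ ^ 2 / 8 - δ ^ 3 / 24))]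

/-- Concentration on a subspace: if a random linear map 𝒜 satisfies the pointwise
concentration bound, then with probability at least
1 − 2 (12/δ)^d exp(−(p/2)(δ²/8 − δ³/24)), the near-isometry bounds
(1−δ)‖X‖_F ≤ ‖𝒜(X)‖ ≤ (1+δ)‖X‖_F hold simultaneously for all X in a fixed
d-dimensional subspace U of matrices (d ≤ p). -/
theorem rip_on_subspace (m n p : ℕ) {Ω : Type*} [MeasurableSpace Ω]
    (ℙ : Measure Ω) [IsProbabilityMeasure ℙ]
    (𝒜 : Ω → Matrix (Fin m) (Fin n) ℝ →ₗ[ℝ] EuclideanSpace ℝ (Fin p))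
    (hmeas : ∀ X : Matrix (Fin m) (Fin n) ℝ, Measurable fun ω => 𝒜 ω X)
    (hconc : ∀ (X : Matrix (Fin m) (Fin n) ℝ) (ε : ℝ), 0 < ε → ε < 1 →
      ℙ {ω | ε * frobNorm X ^ 2 ≤ |‖𝒜 ω X‖ ^ 2 - frobNorm X ^ 2|} ≤
        ENNReal.ofReal (2 * Real.exp (-(p / 2 : ℝ) * (ε ^ 2 / 2 - ε ^ 3 / 3))))
    (U : Submodule ℝ (Matrix (Fin m) (Fin n) ℝ)) (d : ℕ)
    (hd : Module.finrank ℝ U = d) (hdp : d ≤ p)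
    (δ : ℝ) (hδ0 : 0 < δ) (hδ1 : δ < 1) :
    ENNReal.ofReal
        (1 - 2 * (12 / δ) ^ d * Real.exp (-(p / 2 : ℝ) * (δ ^ 2 / 8 - δ ^ 3 / 24))) ≤
      ℙ {ω | ∀ X ∈ U,
        (1 - δ) * frobNorm X ≤ ‖𝒜 ω X‖ ∧ ‖𝒜 ω X‖ ≤ (1 + δ) * frobNorm X} :=
  rip_on_subspace_general m n p ℙ 𝒜 hconc U d hd δ hδ0 hδ1
end

section
/- Let 𝒜 : ℝ^{m×n} → ℝ^p be a linear map (with operator norm ‖𝒜‖ induced by the Frobenius norm on ℝ^{m×n} and Euclidean norm on ℝ^p), and let U₁, U₂ be d-dimensional subspaces of ℝ^{m×n}. Suppose that for all X ∈ U₁, (1−δ)‖X‖_F ≤ ‖𝒜(X)‖ ≤ (1+δ)‖X‖_F for some constant 0 < δ < 1. Then for all Y ∈ U₂, (1−δ')‖Y‖_F ≤ ‖𝒜(Y)‖ ≤ (1+δ')‖Y‖_F, where δ' = δ + (1 + ‖𝒜‖)·‖P_{U₁} − P_{U₂}‖ and P_{U_i} denotes the orthogonal projection of ℝ^{m×n}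 onto U_i, with ‖P_{U₁} − P_{U₂}‖ its operator norm with respect to the Frobenius norm. -/
/-! Project `Y ∈ U₂` onto `U₁`: the projection `X = P_{U₁} Y` lies in `U₁`, is no longer than `Y`,
and `Y - X = (P_{U₂} - P_{U₁}) Y` has norm at most `ε ‖Y‖` with `ε = ‖P_{U₁} - P_{U₂}‖`.
Hence `‖𝒜 Y‖` differs from `‖𝒜 X‖` by at most `‖𝒜‖ ε ‖Y‖`, while `(1 - ε) ‖Y‖ ≤ ‖X‖ ≤ ‖Y‖`,
and the near-isometry bounds at `X` transfer to `Y` with `δ` replaced by `δ + (1 + ‖𝒜‖) ε`. -/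

namespace ContinuousLinearMap

variable {E F : Type*} [SeminormedAddCommGroup E] [NormedSpace ℝ E]
  [SeminormedAddCommGroup F] [NormedSpace ℝ F]

theorem norm_apply_sub_apply_le (A : E →L[ℝ] F) {x y : E} {c : ℝ} (hyx : ‖y - x‖ ≤ c) :
    ‖A y - A x‖ ≤ ‖A‖ * c := by
  rw [← map_sub]
  exact (A.le_opNorm _).trans (mul_le_mul_of_nonneg_left hyx (norm_nonneg A))

theorem norm_apply_le_of_norm_sub_le (A : E →L[ℝ] F) {x y : E} {δ ε : ℝ}
    (hδ : -1 ≤ δ) (hε : 0 ≤ ε) (hxy : ‖x‖ ≤ ‖y‖) (hyx : ‖y - x‖ ≤ ε * ‖y‖)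
    (hx : ‖A x‖ ≤ (1 + δ) * ‖x‖) :
    ‖A y‖ ≤ (1 + (δ + (1 + ‖A‖) * ε)) * ‖y‖ := by
  have hA : ‖A y - A x‖ ≤ ‖A‖ * (ε * ‖y‖) := A.norm_apply_sub_apply_le hyx
  have hεy : 0 ≤ ε * ‖y‖ := mul_nonneg hε (norm_nonneg y)
  calc ‖A y‖ ≤ ‖A x‖ + ‖A‖ * (ε * ‖y‖) := by linarith [norm_sub_norm_le (A y) (A x)]
    _ ≤ (1 + δ) * ‖y‖ + ‖A‖ * (ε * ‖y‖) := by
        linarith [mul_le_mul_of_nonneg_left hxy (by linarith : (0 : ℝ) ≤ 1 + δ)]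
    _ ≤ (1 + (δ + (1 + ‖A‖) * ε)) * ‖y‖ := by linarith

theorem le_norm_apply_of_norm_sub_le (A : E →L[ℝ] F) {x y : E} {δ ε : ℝ}
    (hδ₀ : 0 ≤ δ) (hδ₁ : δ ≤ 1) (hε : 0 ≤ ε) (hyx : ‖y - x‖ ≤ ε * ‖y‖)
    (hx : (1 - δ) * ‖x‖ ≤ ‖A x‖) :
    (1 - (δ + (1 + ‖A‖) * ε)) * ‖y‖ ≤ ‖A y‖ := by
  have hA : ‖A y - A x‖ ≤ ‖A‖ * (ε * ‖y‖) := A.norm_apply_sub_apply_le hyx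
  have hxy : (1 - ε) * ‖y‖ ≤ ‖x‖ := by linarith [norm_sub_norm_le y x]
  have hδεy : 0 ≤ δ * (ε * ‖y‖) := mul_nonneg hδ₀ (mul_nonneg hε (norm_nonneg y))
  calc (1 - (δ + (1 + ‖A‖) * ε)) * ‖y‖ ≤ (1 - δ) * ((1 - ε) * ‖y‖) - ‖A‖ * (ε * ‖y‖) := by
        linarith
    _ ≤ (1 - δ) * ‖x‖ - ‖A‖ * (ε * ‖y‖) := by gcongr
    _ ≤ ‖A y‖ := by linarith [norm_sub_norm_le (A x) (A y), norm_sub_rev (A x) (A y)]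

end ContinuousLinearMap

namespace Submodule

variable {𝕜 E : Type*} [RCLike 𝕜] [NormedAddCommGroup E] [InnerProductSpace 𝕜 E]

theorem norm_sub_starProjection_apply_le_of_mem (U₁ U₂ : Submodule 𝕜 E)
    [U₁.HasOrthogonalProjection] [U₂.HasOrthogonalProjection] {y : E} (hy : y ∈ U₂) :
    ‖y - U₁.starProjection y‖ ≤ ‖U₁.starProjection - U₂.starProjection‖ * ‖y‖ := by
  have hdiff : y - U₁.starProjection y = -((U₁.starProjection - U₂.starProjection) y) := by
    simp [starProjection_eq_self_iff.mpr hy]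
  rw [hdiff, norm_neg]
  exact (U₁.starProjection - U₂.starProjection).le_opNorm y

end Submodule

theorem rip_perturbed_subspace_general (m n p : ℕ)
    (𝒜 : EuclideanSpace ℝ (Fin m × Fin n) →L[ℝ] EuclideanSpace ℝ (Fin p))
    (U₁ U₂ : Submodule ℝ (EuclideanSpace ℝ (Fin m × Fin n)))
    (δ : ℝ) (hδ0 : 0 < δ) (hδ1 : δ < 1)
    (h : ∀ X ∈ U₁, (1 - δ) * ‖X‖ ≤ ‖𝒜 X‖ ∧ ‖𝒜 X‖ ≤ (1 + δ) * ‖X‖)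
    (δ' : ℝ)
    (hδ' : δ' = δ + (1 + ‖𝒜‖) *
      ‖(U₁.subtypeL.comp U₁.orthogonalProjection : EuclideanSpace ℝ (Fin m × Fin n) →L[ℝ]
          EuclideanSpace ℝ (Fin m × Fin n)) -
        U₂.subtypeL.comp U₂.orthogonalProjection‖) :
    ∀ Y ∈ U₂, (1 - δ') * ‖Y‖ ≤ ‖𝒜 Y‖ ∧ ‖𝒜 Y‖ ≤ (1 + δ') * ‖Y‖ := by
  intro Y hY
  have hε : 0 ≤ ‖U₁.starProjection - U₂.starProjection‖ := norm_nonneg _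
  have hYX := U₁.norm_sub_starProjection_apply_le_of_mem U₂ hY
  obtain ⟨hlow, hupp⟩ := h _ (U₁.starProjection_apply_mem Y)
  subst hδ'
  exact ⟨𝒜.le_norm_apply_of_norm_sub_le hδ0.le hδ1.le hε hYX hlow,
    𝒜.norm_apply_le_of_norm_sub_le (by linarith) hε (U₁.norm_starProjection_apply_le Y) hYX hupp⟩

/-- Robustness of near-isometry to perturbations of the subspace. Here ℝ^{m×n} with the
Frobenius norm is represented as the Euclidean space on `Fin m × Fin n` (so ‖X‖ is the
Frobenius norm), 𝒜 is a (continuous) linear map into ℝ^p with ‖𝒜‖ its induced operator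
norm, and P_U denotes the orthogonal projection onto a subspace U. -/
theorem rip_perturbed_subspace (m n p d : ℕ)
    (𝒜 : EuclideanSpace ℝ (Fin m × Fin n) →L[ℝ] EuclideanSpace ℝ (Fin p))
    (U₁ U₂ : Submodule ℝ (EuclideanSpace ℝ (Fin m × Fin n)))
    (hU₁ : Module.finrank ℝ U₁ = d) (hU₂ : Module.finrank ℝ U₂ = d)
    (δ : ℝ) (hδ0 : 0 < δ) (hδ1 : δ < 1)
    (h : ∀ X ∈ U₁, (1 - δ) * ‖X‖ ≤ ‖𝒜 X‖ ∧ ‖𝒜 X‖ ≤ (1 + δ) * ‖X‖)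
    (δ' : ℝ)
    (hδ' : δ' = δ + (1 + ‖𝒜‖) *
      ‖(U₁.subtypeL.comp U₁.orthogonalProjection : EuclideanSpace ℝ (Fin m × Fin n) →L[ℝ]
          EuclideanSpace ℝ (Fin m × Fin n)) -
        U₂.subtypeL.comp U₂.orthogonalProjection‖) :
    ∀ Y ∈ U₂, (1 - δ') * ‖Y‖ ≤ ‖𝒜 Y‖ ∧ ‖𝒜 Y‖ ≤ (1 + δ') * ‖Y‖ :=
  rip_perturbed_subspace_general m n p 𝒜 U₁ U₂ δ hδ0 hδ1 h δ' hδ'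
end
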